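/- arXiv:2210.06389 — 5 statements merged into one kernel-verified Lean document; each statement's English description precedes it below -/
import Mathlib

section
/- Let α₁ ≥ 0, α₂, β ∈ ℝ, let M ≥ 1, N ≥ 0 be integers, and a, b ∈ ℂ* with aM + bN ≠ 0, a/(aM+bN) = α₁ + iα₂, b/(aM+bN) = iβ. Fix x, y ∈ ℂ* with (aM+bN) x^M y^N ∉ ℝ. Define for t ∈ ℝ: x(t) = x (1 - (aM+bN) x^M y^N t)^{-a/(aM+bN)} and y(t) = y (1 - (aM+bN) x^M y^N t)^{-b/(aM+bN)} (principal branches). Then there exists C > 0 such that for all t ∈ ℝ: |x(t)| ≤ C e^{|α₂|π} |x| and e^{-|β|π} |y| ≤ |y(t)| ≤ e^{|β|π} |y|. -/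
open Complex Real

/-!
Put `s = (aM+bN) x^M y^N` and `w(t) = 1 - s t`. Since `s ∉ ℝ`, the line `t ↦ 1 - s t` stays
at distance `|Im s| / |s| > 0` from the origin, so `|w(t)|^{-α₁}` is bounded when `α₁ ≥ 0`.
The remaining factor `e^{-Im λ · arg w}` of `|w^λ|` lies between `e^{-|Im λ| π}` and
`e^{|Im λ| π}` because `|arg w| ≤ π`; for `y(t)` the exponent is purely imaginary, so this
factor is all there is.
-/

namespace Complex

open ComplexConjugate

lemma abs_im_le_norm_mul_norm_one_sub_mul_ofReal (s : ℂ) (t : ℝ) :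
    |s.im| ≤ ‖s‖ * ‖1 - s * t‖ := by
  have him : (conj s * (1 - s * t)).im = -s.im := by
    simp only [mul_im, conj_re, conj_im, sub_re, sub_im, one_re, one_im, mul_re, ofReal_re,
      ofReal_im]
    ring
  calc |s.im| = |(conj s * (1 - s * t)).im| := by rw [him, abs_neg]
    _ ≤ ‖conj s * (1 - s * t)‖ := abs_im_le_norm _
    _ = ‖s‖ * ‖1 - s * t‖ := by rw [norm_mul, norm_conj]

lemma one_sub_mul_ofReal_ne_zero {s : ℂ} (hs : s.im ≠ 0) (t : ℝ) : 1 - s * t ≠ 0 := by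
  intro h
  have := abs_im_le_norm_mul_norm_one_sub_mul_ofReal s t
  rw [h, norm_zero, mul_zero] at this
  exact hs (abs_nonpos_iff.mp this)

lemma abs_arg_mul_le (w : ℂ) (c : ℝ) : |arg w * c| ≤ |c| * π := by
  rw [abs_mul, mul_comm]
  exact mul_le_mul_of_nonneg_left (abs_arg_le_pi w) (abs_nonneg c)

lemma norm_cpow_le_rpow_mul_exp (w z : ℂ) : ‖w ^ z‖ ≤ ‖w‖ ^ z.re * Real.exp (|z.im| * π) := by
  refine (norm_cpow_le w z).trans ?_
  rw [div_eq_mul_inv, ← Real.exp_neg]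
  exact mul_le_mul_of_nonneg_left
    (Real.exp_le_exp.mpr ((neg_le_abs _).trans (abs_arg_mul_le w z.im))) (by positivity)

lemma rpow_mul_exp_le_norm_cpow {w : ℂ} (hw : w ≠ 0) (z : ℂ) :
    ‖w‖ ^ z.re * Real.exp (-(|z.im| * π)) ≤ ‖w ^ z‖ := by
  rw [norm_cpow_of_ne_zero hw, div_eq_mul_inv, ← Real.exp_neg]
  exact mul_le_mul_of_nonneg_left
    (Real.exp_le_exp.mpr (neg_le_neg ((le_abs_self _).trans (abs_arg_mul_le w z.im))))
    (by positivity)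

lemma exists_norm_one_sub_mul_ofReal_cpow_le {s : ℂ} (hs : s.im ≠ 0) {z : ℂ} (hz : z.re ≤ 0) :
    ∃ C > 0, ∀ t : ℝ, ‖(1 - s * t) ^ z‖ ≤ C * Real.exp (|z.im| * π) := by
  have hs₀ : 0 < ‖s‖ := norm_pos_iff.mpr fun h => hs (by simp [h])
  have hδ : 0 < |s.im| / ‖s‖ := div_pos (abs_pos.mpr hs) hs₀
  refine ⟨(|s.im| / ‖s‖) ^ z.re, Real.rpow_pos_of_pos hδ _, fun t => ?_⟩
  have hdist : |s.im| / ‖s‖ ≤ ‖1 - s * t‖ :=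
    (div_le_iff₀' hs₀).mpr (abs_im_le_norm_mul_norm_one_sub_mul_ofReal s t)
  calc ‖(1 - s * t) ^ z‖ ≤ ‖1 - s * t‖ ^ z.re * Real.exp (|z.im| * π) :=
        norm_cpow_le_rpow_mul_exp _ _
    _ ≤ (|s.im| / ‖s‖) ^ z.re * Real.exp (|z.im| * π) := by
        exact mul_le_mul_of_nonneg_right (Real.rpow_le_rpow_of_nonpos hδ hdist hz)
          (Real.exp_pos _).le

end Complex

theorem stmt_4_general (α₁ α₂ β : ℝ) (hα₁ : 0 ≤ α₁) (M N : ℕ)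
    (a b : ℂ)
    (hA : a / (a * M + b * N) = Complex.mk α₁ α₂)
    (hB : b / (a * M + b * N) = Complex.mk 0 β)
    (x y : ℂ)
    (hnr : ∀ r : ℝ, (a * M + b * N) * x ^ M * y ^ N ≠ (r : ℂ)) :
    ∃ C > 0, ∀ t : ℝ,
      ‖x * (1 - (a * M + b * N) * x ^ M * y ^ N * t) ^ (-(a / (a * M + b * N)))‖
        ≤ C * Real.exp (|α₂| * π) * ‖x‖ ∧
      Real.exp (-(|β| * π)) * ‖y‖
        ≤ ‖y * (1 - (a * M + b * N) * x ^ M * y ^ N * t) ^ (-(b / (a * M + b * N)))‖ ∧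
      ‖y * (1 - (a * M + b * N) * x ^ M * y ^ N * t) ^ (-(b / (a * M + b * N)))‖
        ≤ Real.exp (|β| * π) * ‖y‖ := by
  set s : ℂ := (a * M + b * N) * x ^ M * y ^ N
  have hs : s.im ≠ 0 := fun h => hnr s.re (Complex.ext rfl h)
  rw [hA, hB]
  obtain ⟨C, hC, hx⟩ := exists_norm_one_sub_mul_ofReal_cpow_le hs
    (z := -Complex.mk α₁ α₂) (by simpa using hα₁)
  refine ⟨C, hC, fun t => ⟨?_, ?_, ?_⟩⟩
  · simpa [norm_mul, abs_neg, mul_comm ‖x‖] using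
      mul_le_mul_of_nonneg_left (hx t) (norm_nonneg x)
  · simpa [norm_mul, abs_neg, mul_comm ‖y‖] using mul_le_mul_of_nonneg_left
      (rpow_mul_exp_le_norm_cpow (one_sub_mul_ofReal_ne_zero hs t) (-Complex.mk 0 β))
      (norm_nonneg y)
  · simpa [norm_mul, abs_neg, mul_comm ‖y‖] using mul_le_mul_of_nonneg_left
      (norm_cpow_le_rpow_mul_exp (1 - s * t) (-Complex.mk 0 β)) (norm_nonneg y)

/-- Bounds on the explicit solutions of `x^M y^N (a x ∂_x + b y ∂_y)` when
`a/(aM+bN) = α₁ + iα₂` with `α₁ ≥ 0` and `b/(aM+bN) = iβ`: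
`|x(t)| ≤ C e^{|α₂|π} |x|` and `e^{-|β|π}|y| ≤ |y(t)| ≤ e^{|β|π}|y|` for all real `t`. -/
theorem stmt_4 (α₁ α₂ β : ℝ) (hα₁ : 0 ≤ α₁) (M N : ℕ) (hM : 1 ≤ M)
    (a b : ℂ) (ha : a ≠ 0) (hb : b ≠ 0)
    (hs : a * M + b * N ≠ 0)
    (hA : a / (a * M + b * N) = Complex.mk α₁ α₂)
    (hB : b / (a * M + b * N) = Complex.mk 0 β)
    (x y : ℂ) (hx : x ≠ 0) (hy : y ≠ 0)
    (hnr : ∀ r : ℝ, (a * M + b * N) * x ^ M * y ^ N ≠ (r : ℂ)) :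
    ∃ C > 0, ∀ t : ℝ,
      ‖x * (1 - (a * M + b * N) * x ^ M * y ^ N * t) ^ (-(a / (a * M + b * N)))‖
        ≤ C * Real.exp (|α₂| * π) * ‖x‖ ∧
      Real.exp (-(|β| * π)) * ‖y‖
        ≤ ‖y * (1 - (a * M + b * N) * x ^ M * y ^ N * t) ^ (-(b / (a * M + b * N)))‖ ∧
      ‖y * (1 - (a * M + b * N) * x ^ M * y ^ N * t) ^ (-(b / (a * M + b * N)))‖
        ≤ Real.exp (|β| * π) * ‖y‖ :=
  stmt_4_general α₁ α₂ β hα₁ M N a b hA hB x y hnr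
end

section
/- Let V_w = {z ∈ ℂ : |z| > R, |arg z| < θ} with R > 0 and θ ∈ (0, π/2), and let β : V_w → ℂ be holomorphic with β(z)/z → 1 as z → ∞ in V_w. Then for every ζ ∈ ℂ there exists j ∈ ℕ such that ζ + j ∈ β(V_w); that is, ⋃_{j∈ℕ} (β(V_w) - j) = ℂ. -/
/-!
For large `j`, the disc of radius `ρ j` around `ζ + j` lies in the sector (for a suitable
`ρ > 0` depending only on `θ`) and far enough out that `‖β z - z‖ < ρ j / 4` on it. A
holomorphic map that close to the identity on a disc covers the centre of the disc: on the
boundary circle `β` stays `ρ j / 2` away from `β (ζ + j)`, so by the open mapping estimate its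
image contains a disc of radius `ρ j / 4` around `β (ζ + j)`, and `ζ + j` is in that disc.
-/

open Complex Filter Real

open Metric Set Topology

theorem Complex.abs_arg_lt_of_cos_mul_norm_lt_re {θ : ℝ} (hθ : 0 ≤ θ) {z : ℂ}
    (h : Real.cos θ * ‖z‖ < z.re) : |arg z| < θ := by
  have hz : z ≠ 0 := by rintro rfl; simp at h
  by_contra! hle
  have hcos : Real.cos |arg z| ≤ Real.cos θ :=
    Real.cos_le_cos_of_nonneg_of_le_pi hθ (abs_arg_le_pi z) hle
  rw [Real.cos_abs, cos_arg hz, div_le_iff₀ (norm_pos_iff.mpr hz)] at hcos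
  linarith

theorem norm_le_of_mem_closedBall_add_natCast {ζ z : ℂ} {j : ℕ} {r : ℝ}
    (hz : z ∈ closedBall (ζ + j) r) : ‖z‖ ≤ ‖ζ‖ + j + r := by
  have := norm_add_le ζ (j : ℂ)
  rw [Complex.norm_natCast] at this
  linarith [norm_le_of_mem_closedBall hz]

theorem eventually_closedBall_add_natCast_subset_sector {θ ρ : ℝ} (hθ0 : 0 ≤ θ)
    (hθ : θ ≤ π / 2) (hρ : (1 + Real.cos θ) * ρ < 1 - Real.cos θ) (ζ : ℂ) (M : ℝ) :
    ∀ᶠ j : ℕ in atTop,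
      closedBall (ζ + j) (ρ * j) ⊆ {z : ℂ | M < ‖z‖ ∧ |arg z| < θ} := by
  set c := Real.cos θ
  have hc : 0 ≤ c := Real.cos_nonneg_of_mem_Icc ⟨by linarith [Real.pi_pos], hθ⟩
  have hρ1 : 0 < 1 - ρ := by nlinarith
  have hlarge : ∀ a b : ℝ, 0 < a → ∀ᶠ j : ℕ in atTop, b < (j : ℝ) * a := fun a b ha =>
    (tendsto_natCast_atTop_atTop.atTop_mul_const ha).eventually_gt_atTop b
  filter_upwards [hlarge (1 - ρ) (M + ‖ζ‖) hρ1,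
    hlarge (1 - c - (1 + c) * ρ) (‖ζ‖ * (1 + c)) (by linarith)] with j hjM hjθ z hz
  have hre : (j : ℝ) * (1 - ρ) - ‖ζ‖ ≤ z.re := by
    have hdist : |(z - (ζ + j)).re| ≤ ρ * j :=
      (abs_re_le_norm _).trans (mem_closedBall_iff_norm.mp hz)
    have hζ : |ζ.re| ≤ ‖ζ‖ := abs_re_le_norm ζ
    have hsplit : z.re = (z - (ζ + j)).re + ζ.re + j := by simp; ring
    linarith [abs_le.mp hdist, abs_le.mp hζ]
  have hcos : c * ‖z‖ ≤ c * (‖ζ‖ + j + ρ * j) :=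
    mul_le_mul_of_nonneg_left (norm_le_of_mem_closedBall_add_natCast hz) hc
  refine ⟨by linarith [re_le_norm z], abs_arg_lt_of_cos_mul_norm_lt_re hθ0 ?_⟩
  nlinarith

theorem eventually_norm_sub_lt_mul_norm {𝕜 : Type*} [NormedField 𝕜] {l : Filter 𝕜}
    {f : 𝕜 → 𝕜} (hl : ∀ᶠ z in l, z ≠ 0) (hf : Tendsto (fun z => f z / z) l (𝓝 1))
    {ε : ℝ} (hε : 0 < ε) : ∀ᶠ z in l, ‖f z - z‖ < ε * ‖z‖ := by
  filter_upwards [hl, Metric.tendsto_nhds.mp hf ε hε] with z hz hdist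
  rw [dist_eq_norm] at hdist
  calc ‖f z - z‖ = ‖f z / z - 1‖ * ‖z‖ := by
        rw [← norm_mul, sub_mul, div_mul_cancel₀ _ hz, one_mul]
    _ < ε * ‖z‖ := mul_lt_mul_of_pos_right hdist (norm_pos_iff.mpr hz)

theorem frequently_ne_of_differentiableOn_ball {f : ℂ → ℂ} {c z : ℂ} {r : ℝ}
    (hf : DifferentiableOn ℂ f (ball c r)) (hz : z ∈ ball c r) (hne : f z ≠ f c) :
    ∃ᶠ w in 𝓝 c, f w ≠ f c := by
  have hc : c ∈ ball c r := mem_ball_self (pos_of_mem_ball hz)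
  intro hconst
  exact hne ((hf.analyticOnNhd isOpen_ball).eqOn_of_preconnected_of_eventuallyEq
    analyticOnNhd_const (convex_ball c r).isPreconnected hc (hconst.mono fun _ => not_not.mp) hz)

theorem mem_image_closedBall_of_norm_sub_lt {f : ℂ → ℂ} {c : ℂ} {r : ℝ} (hr : 0 < r)
    (hf : DifferentiableOn ℂ f (closedBall c r))
    (hclose : ∀ z ∈ closedBall c r, ‖f z - z‖ < r / 4) : c ∈ f '' closedBall c r := by
  have hc := hclose c (mem_closedBall_self hr.le)
  have hsphere : ∀ z ∈ sphere c r, r / 2 ≤ ‖f z - f c‖ := by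
    intro z hz
    have hzc : ‖z - c‖ = r := mem_sphere_iff_norm.mp hz
    have hz := hclose z (sphere_subset_closedBall hz)
    have htri : ‖z - c‖ ≤ ‖f z - z‖ + ‖f z - f c‖ + ‖f c - c‖ := by
      calc ‖z - c‖ = ‖(z - f z) + (f z - f c) + (f c - c)‖ := by ring_nf
        _ ≤ ‖z - f z‖ + ‖f z - f c‖ + ‖f c - c‖ := norm_add₃_le
        _ = _ := by rw [norm_sub_rev z]
    linarith
  have hnonconst : ∃ᶠ w in 𝓝 c, f w ≠ f c := by
    set z := c + ((r / 2 : ℝ) : ℂ)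
    have hzc : ‖z - c‖ = r / 2 := by simp [z, abs_of_pos hr]
    have hz : z ∈ ball c r := by rw [mem_ball_iff_norm, hzc]; linarith
    refine frequently_ne_of_differentiableOn_ball (hf.mono ball_subset_closedBall) hz ?_
    intro hfz
    have hz := hclose z (ball_subset_closedBall hz)
    have htri : ‖z - c‖ ≤ ‖f z - z‖ + ‖f c - c‖ := by
      calc ‖z - c‖ = ‖(z - f z) + (f c - c)‖ := by rw [hfz]; ring_nf
        _ ≤ ‖z - f z‖ + ‖f c - c‖ := norm_add_le _ _
        _ = _ := by rw [norm_sub_rev z]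
    linarith
  refine (hf.diffContOnCl_ball subset_rfl).ball_subset_image_closedBall hr hsphere hnonconst ?_
  rw [mem_ball_iff_norm, norm_sub_rev]
  linarith

theorem stmt_10_general (R θ : ℝ) (hθ0 : 0 < θ) (hθ : θ < π / 2)
    (V : Set ℂ) (hVdef : V = {z : ℂ | R < ‖z‖ ∧ |Complex.arg z| < θ})
    (β : ℂ → ℂ) (hβ : DifferentiableOn ℂ β V)
    (hlim : Tendsto (fun z => β z / z) ((Filter.comap norm atTop) ⊓ 𝓟 V) (nhds 1)) :
    ∀ ζ : ℂ, ∃ j : ℕ, ζ + (j : ℂ) ∈ β '' V := by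
  intro ζ
  set c := Real.cos θ
  have hc0 : 0 < c := Real.cos_pos_of_mem_Ioo ⟨by linarith, hθ⟩
  have hc1 : c < 1 := by
    simpa using Real.cos_lt_cos_of_nonneg_of_le_pi le_rfl (by linarith [Real.pi_pos]) hθ0
  obtain ⟨ρ, hρ0, hρ⟩ := exists_pos_mul_lt (sub_pos.mpr hc1) (1 + c)
  have hnonzero : ∀ᶠ z in comap norm atTop ⊓ 𝓟 V, z ≠ 0 :=
    (tendsto_comap.eventually_gt_atTop 0).filter_mono inf_le_left |>.mono fun _ => norm_pos_iff.mp
  obtain ⟨M, hM⟩ := eventually_atTop.mp <| eventually_comap.mp <| eventually_inf_principal.mp <|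
    eventually_norm_sub_lt_mul_norm hnonzero hlim (ε := ρ / 12) (by positivity)
  obtain ⟨j, hj0, hjζ, hdisc⟩ := ((eventually_gt_atTop 0).and <|
    (tendsto_natCast_atTop_atTop.eventually_ge_atTop ‖ζ‖).and <|
      eventually_closedBall_add_natCast_subset_sector hθ0.le hθ.le hρ ζ (max M R)).exists
  have hdiscV : closedBall (ζ + j) (ρ * j) ⊆ V := fun z hz => by
    obtain ⟨hzM, hzθ⟩ := hdisc hz
    exact hVdef ▸ ⟨(le_max_right M R).trans_lt hzM, hzθ⟩
  have hclose : ∀ z ∈ closedBall (ζ + j) (ρ * j), ‖β z - z‖ < ρ * j / 4 := by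
    intro z hz
    have hzj : ‖z‖ ≤ 3 * j := by nlinarith [norm_le_of_mem_closedBall_add_natCast hz]
    calc ‖β z - z‖ < ρ / 12 * ‖z‖ :=
          hM ‖z‖ ((le_max_left M R).trans (hdisc hz).1.le) z rfl (hdiscV hz)
      _ ≤ ρ / 12 * (3 * j) := by gcongr
      _ = ρ * j / 4 := by ring
  obtain ⟨w, hw, hβw⟩ := mem_image_closedBall_of_norm_sub_lt (by positivity)
    (hβ.mono hdiscV) hclose
  exact ⟨j, w, hdiscV hw, hβw⟩

/-- If `β` is holomorphic on the sector `V = {|z| > R, |arg z| < θ}` (`θ < π/2`) and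
`β(z)/z → 1` as `z → ∞` in `V`, then `⋃_{j∈ℕ} (β(V) - j) = ℂ`: for every `ζ ∈ ℂ`
there is `j ∈ ℕ` with `ζ + j ∈ β(V)`. -/
theorem stmt_10 (R θ : ℝ) (hR : 0 < R) (hθ0 : 0 < θ) (hθ : θ < π / 2)
    (V : Set ℂ) (hVdef : V = {z : ℂ | R < ‖z‖ ∧ |Complex.arg z| < θ})
    (β : ℂ → ℂ) (hβ : DifferentiableOn ℂ β V)
    (hlim : Tendsto (fun z => β z / z) ((Filter.comap norm atTop) ⊓ 𝓟 V) (nhds 1)) :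
    ∀ ζ : ℂ, ∃ j : ℕ, ζ + (j : ℂ) ∈ β '' V :=
  stmt_10_general R θ hθ0 hθ V hVdef β hβ hlim
end

section
/- Let m, n, d, p, q be natural numbers with n ≥ 1, qm - pn = 1, and let a, b ∈ ℂ with d·m·a + d·n·b = -1, λ = d(ap + bq). Define φ(x,y) = (1/(x^m y^n)^d, x^p y^q (x^m y^n)^λ) on a domain where x^m y^n avoids (-∞, 0]. Then the map (z,w) ↦ (z^a w^{-n}, z^b w^m) (principal branches) is a local inverse of φ: if x = z^a w^{-n} and y = z^b w^m with z avoiding (-∞,0], then x^m y^n = z^{-1/d} and x^p y^q (x^m y^n)^λ = w. -/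
open Complex

/-- Local inverse of the approximate Fatou coordinate
`φ(x,y) = (1/(x^m y^n)^d, x^p y^q (x^m y^n)^λ)`: if `x = z^a w^{-n}` and `y = z^b w^m`
(principal branches, `z` avoiding `(-∞,0]`, `w ≠ 0`), with `qm - pn = 1`,
`dma + dnb = -1` and `λ = d(ap + bq)`, then `x^m y^n = z^{-1/d}` and
`x^p y^q (x^m y^n)^λ = w`. -/
theorem stmt_11 (m n d p q : ℕ) (hn : 1 ≤ n)
    (hpq : (q : ℤ) * m - (p : ℤ) * n = 1)
    (a b : ℂ) (hab : (d : ℂ) * m * a + (d : ℂ) * n * b = -1)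
    (lam : ℂ) (hlam : lam = (d : ℂ) * (a * p + b * q))
    (z w : ℂ) (hz : ¬(z.re ≤ 0 ∧ z.im = 0)) (hw : w ≠ 0)
    (x y : ℂ) (hx : x = z ^ a * w ^ (-(n : ℂ))) (hy : y = z ^ b * w ^ (m : ℂ)) :
    x ^ m * y ^ n = z ^ (-(1 / (d : ℂ))) ∧
    x ^ p * y ^ q * (x ^ m * y ^ n) ^ lam = w := by
  have hd : (d : ℂ) ≠ 0 := by
    intro h; rw [h] at hab; simp at hab
  have hdN : d ≠ 0 := by exact_mod_cast fun h => hd (by exact_mod_cast congrArg (Nat.cast : ℕ → ℂ) h)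
  have hz0 : z ≠ 0 := by
    rintro rfl; exact hz ⟨le_refl 0, rfl⟩
  set L := Complex.log z with hL
  set W := Complex.log w with hW
  have hzc : ∀ c : ℂ, z ^ c = Complex.exp (c * L) := fun c =>
    by rw [Complex.cpow_def_of_ne_zero hz0, mul_comm]
  have hwc : ∀ c : ℂ, w ^ c = Complex.exp (c * W) := fun c =>
    by rw [Complex.cpow_def_of_ne_zero hw, mul_comm]
  have hxe : x = Complex.exp (a * L - (n : ℂ) * W) := by
    rw [hx, hzc, hwc, ← Complex.exp_add]; ring_nf
  have hye : y = Complex.exp (b * L + (m : ℂ) * W) := by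
    rw [hy, hzc, hwc, ← Complex.exp_add]
  have hpow : ∀ (t : ℂ) (k : ℕ), Complex.exp t ^ k = Complex.exp ((k : ℂ) * t) := by
    intro t k; rw [← Complex.exp_nat_mul]
  have hmn : (m : ℂ) * a + (n : ℂ) * b = -(1 / (d : ℂ)) := by
    field_simp
    linear_combination hab
  have key1 : x ^ m * y ^ n = Complex.exp (-(1 / (d : ℂ)) * L) := by
    rw [hxe, hye, hpow, hpow, ← Complex.exp_add]
    congr 1
    linear_combination L * hmn
  have hpqC : (q : ℂ) * m - (p : ℂ) * n = 1 := by exact_mod_cast hpq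
  -- arg bounds
  have harg1 : -Real.pi < z.arg := Complex.neg_pi_lt_arg z
  have harg2 : z.arg < Real.pi := by
    rcases lt_or_eq_of_le (Complex.arg_le_pi z) with h | h
    · exact h
    · exfalso
      rcases Complex.arg_eq_pi_iff.mp h with ⟨h1, h2⟩
      exact hz ⟨le_of_lt h1, h2⟩
  have hd1 : (1 : ℝ) ≤ (d : ℝ) := by exact_mod_cast Nat.one_le_iff_ne_zero.mpr hdN
  have hdpos : (0 : ℝ) < (d : ℝ) := lt_of_lt_of_le one_pos hd1
  have him : (-(1 / (d : ℂ)) * L).im = -(1 / (d : ℝ)) * z.arg := by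
    simp [Complex.mul_im, hL, Complex.log_im]
  have hr1 : (0 : ℝ) < 1 / (d : ℝ) := by positivity
  have hr2 : 1 / (d : ℝ) ≤ 1 := by
    rw [div_le_one hdpos]; exact hd1
  have him1 : -Real.pi < (-(1 / (d : ℂ)) * L).im := by
    rw [him]; nlinarith [Real.pi_pos]
  have him2 : (-(1 / (d : ℂ)) * L).im ≤ Real.pi := by
    rw [him]; nlinarith [Real.pi_pos]
  have hlog : Complex.log (Complex.exp (-(1 / (d : ℂ)) * L)) = -(1 / (d : ℂ)) * L :=
    Complex.log_exp him1 him2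
  have hlam' : lam * (1 / (d : ℂ)) = a * (p : ℂ) + b * (q : ℂ) := by
    rw [hlam]; field_simp
  constructor
  · rw [key1, hzc]
  · rw [key1, Complex.cpow_def_of_ne_zero (Complex.exp_ne_zero _), hlog,
      hxe, hye, hpow, hpow, ← Complex.exp_add, ← Complex.exp_add]
    rw [show (p : ℂ) * (a * L - (n : ℂ) * W) + (q : ℂ) * (b * L + (m : ℂ) * W) +
        -(1 / (d : ℂ)) * L * lam = W by linear_combination (-L) * hlam' + W * hpqC]
    exact Complex.exp_log hw
end

section
/- Let f : V → V be holomorphic with f(z) = z + 1 + h(z), where |h(z)| ≤ K|z|^{-γ/d} on V (K, γ, d > 0), and suppose |f^j(p)| ≥ j/2 for all j for some p ∈ V. Let β_j(z) = f^j(z) - f^j(p) and suppose β_j → β uniformly on V. Then β(f(z)) = β(z) + 1 for all z ∈ V. -/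
open Filter

/-- Functional equation of the Fatou coordinate: if `f(z) = z + 1 + h(z)` with
`|h(z)| ≤ K|z|^{-γ/d}` on `V`, `|f^j(p)| ≥ j/2` for all `j`, and
`β_j(z) = f^j(z) - f^j(p)` converges uniformly on `V` to `β`, then
`β(f(z)) = β(z) + 1` on `V`. -/
theorem stmt_15 (V : Set ℂ) (f h : ℂ → ℂ) (hfmap : Set.MapsTo f V V)
    (hf : ∀ z ∈ V, f z = z + 1 + h z)
    (K γ d : ℝ) (hK : 0 < K) (hγ : 0 < γ) (hd : 0 < d)
    (hh : ∀ z ∈ V, ‖h z‖ ≤ K * ‖z‖ ^ (-(γ / d)))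
    (p : ℂ) (hp : p ∈ V) (hgrow : ∀ j : ℕ, ‖f^[j] p‖ ≥ j / 2)
    (β : ℂ → ℂ)
    (hlim : TendstoUniformlyOn (fun j z => f^[j] z - f^[j] p) β atTop V) :
    ∀ z ∈ V, β (f z) = β z + 1 := by
  intro z hz
  set c := γ / d with hc
  have hc0 : 0 < c := div_pos hγ hd
  have hmem : ∀ j : ℕ, f^[j] p ∈ V := by
    intro j
    induction j with
    | zero => simpa using hp
    | succ n ih => rw [Function.iterate_succ_apply']; exact hfmap ih
  -- the error term tends to 0
  have hbound : ∀ j : ℕ, 1 ≤ j → ‖f^[j+1] p - f^[j] p - 1‖ ≤ K * ((j:ℝ)/2) ^ (-c) := by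
    intro j hj
    have hmemj := hmem j
    have e1 : f^[j+1] p = f (f^[j] p) := by rw [Function.iterate_succ_apply']
    rw [e1, hf _ hmemj]
    have e2 : f^[j] p + 1 + h (f^[j] p) - f^[j] p - 1 = h (f^[j] p) := by ring
    rw [e2]
    have h1 := hh _ hmemj
    have h2 : ((j:ℝ)/2) ≤ ‖f^[j] p‖ := hgrow j
    have h3 : (0:ℝ) < (j:ℝ)/2 := by
      have : (1:ℝ) ≤ j := by exact_mod_cast hj
      linarith
    have h4 : ‖f^[j] p‖ ^ (-c) ≤ ((j:ℝ)/2) ^ (-c) :=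
      Real.rpow_le_rpow_of_nonpos h3 h2 (by linarith)
    calc ‖h (f^[j] p)‖ ≤ K * ‖f^[j] p‖ ^ (-c) := h1
      _ ≤ K * ((j:ℝ)/2) ^ (-c) := mul_le_mul_of_nonneg_left h4 hK.le
  have hto : Tendsto (fun j : ℕ => K * ((j:ℝ)/2) ^ (-c)) atTop (nhds 0) := by
    have h5 : Tendsto (fun j : ℕ => ((j:ℝ)/2)) atTop atTop :=
      (tendsto_natCast_atTop_atTop).atTop_div_const two_pos
    have h6 := (tendsto_rpow_neg_atTop hc0).comp h5
    have h7 := h6.const_mul K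
    simpa using h7
  have herr : Tendsto (fun j : ℕ => f^[j+1] p - f^[j] p - 1) atTop (nhds (0:ℂ)) :=
    squeeze_zero_norm' (eventually_atTop.2 ⟨1, hbound⟩) hto
  -- two limits of the same sequence
  have hA : Tendsto (fun j : ℕ => f^[j] (f z) - f^[j] p) atTop (nhds (β (f z))) :=
    hlim.tendsto_at (hfmap hz)
  have hB : Tendsto (fun j : ℕ => f^[j+1] z - f^[j+1] p) atTop (nhds (β z)) :=
    (hlim.tendsto_at hz).comp (tendsto_add_atTop_nat 1)
  have hA' : Tendsto (fun j : ℕ => f^[j] (f z) - f^[j] p) atTop (nhds (β z + 1)) := by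
    have heq : (fun j : ℕ => f^[j] (f z) - f^[j] p)
        = fun j : ℕ => (f^[j+1] z - f^[j+1] p) + ((f^[j+1] p - f^[j] p - 1) + 1) := by
      funext j
      rw [← Function.iterate_succ_apply]
      ring
    rw [heq]
    have := hB.add (herr.add (tendsto_const_nhds (x := (1:ℂ))))
    simpa using this
  exact tendsto_nhds_unique hA hA'
end

section
/- Let F(x,y) = (x + x^{M+1} y^N [a + A(x,y)], y + x^M y^{N+1} [b + B(x,y)]) with M, N ≥ 1 integers, a, b ∈ ℂ, aM + bN = -1, A and B holomorphic with A(0,0) = B(0,0) = 0. Write d = gcd(M,N), m = M/d, n = N/d, and (x₁,y₁) = F(x,y). Then x₁^m y₁^n = x^m y^n - (1/d)(x^m y^n)^{d+1} + (x^m y^n)^{d+1} E(x,y), where E is holomorphic near 0 with E(0,0) = 0. -/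
open Complex Finset

private noncomputable def Rf (m n : ℕ) (w s t : ℂ) : ℂ :=
  ∑ k ∈ Finset.range (m+1), ∑ l ∈ Finset.range (n+1),
    if 2 ≤ k + l then (m.choose k : ℂ) * (n.choose l) * w^(k+l-2) * s^k * t^l else 0

private lemma Rf_analytic {w s t : ℂ × ℂ → ℂ} {x : ℂ × ℂ} (hw : AnalyticAt ℂ w x)
    (hs : AnalyticAt ℂ s x) (ht : AnalyticAt ℂ t x) (m n : ℕ) :
    AnalyticAt ℂ (fun p => Rf m n (w p) (s p) (t p)) x := by
  unfold Rf
  apply Finset.analyticAt_fun_sum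
  intro k _
  apply Finset.analyticAt_fun_sum
  intro l _
  by_cases h : 2 ≤ k + l
  · simp only [if_pos h]
    exact (((analyticAt_const.mul (hw.pow _))).mul (hs.pow _)).mul (ht.pow _)
  · simp only [if_neg h]
    exact analyticAt_const

private lemma key (m n : ℕ) (hm : 1 ≤ m) (hn : 1 ≤ n) (w s t : ℂ) :
    (1 + w*s)^m * (1 + w*t)^n
      = 1 + w*((m:ℂ)*s + (n:ℂ)*t) + w^2 * Rf m n w s t := by
  have h1 : (1 + w*s)^m = ∑ k ∈ range (m+1), (m.choose k : ℂ) * w^k * s^k := by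
    rw [add_comm, add_pow]
    refine Finset.sum_congr rfl fun k hk => ?_
    rw [one_pow, mul_pow]; ring
  have h2 : (1 + w*t)^n = ∑ l ∈ range (n+1), (n.choose l : ℂ) * w^l * t^l := by
    rw [add_comm, add_pow]
    refine Finset.sum_congr rfl fun l hl => ?_
    rw [one_pow, mul_pow]; ring
  set g : ℕ × ℕ → ℂ := fun kl =>
    (m.choose kl.1 : ℂ) * (n.choose kl.2 : ℂ) * w^(kl.1+kl.2) * s^kl.1 * t^kl.2 with hg
  have hL : (1 + w*s)^m * (1 + w*t)^n = ∑ x ∈ range (m+1) ×ˢ range (n+1), g x := by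
    rw [h1, h2, Finset.sum_mul_sum, Finset.sum_product]
    refine Finset.sum_congr rfl fun k _ => Finset.sum_congr rfl fun l _ => ?_
    simp only [hg, pow_add]; ring
  have hR : w^2 * Rf m n w s t
      = ∑ x ∈ (range (m+1) ×ˢ range (n+1)).filter (fun x => 2 ≤ x.1 + x.2), g x := by
    rw [Finset.sum_filter, Finset.sum_product]
    unfold Rf
    rw [Finset.mul_sum]
    refine Finset.sum_congr rfl fun k _ => ?_
    rw [Finset.mul_sum]
    refine Finset.sum_congr rfl fun l _ => ?_
    by_cases h : 2 ≤ k + l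
    · simp only [if_pos h, hg]
      conv_rhs => rw [show k + l = 2 + (k + l - 2) from by omega, pow_add]
      ring
    · simp only [if_neg h, mul_zero]
  have hsplit := Finset.sum_filter_add_sum_filter_not
    (range (m+1) ×ˢ range (n+1)) (fun x => 2 ≤ x.1 + x.2) g
  have hsmall : (range (m+1) ×ˢ range (n+1)).filter (fun x => ¬ 2 ≤ x.1 + x.2)
      = {(0,0), (1,0), (0,1)} := by
    ext ⟨k, l⟩
    simp only [Finset.mem_filter, Finset.mem_product, Finset.mem_range,
      Finset.mem_insert, Finset.mem_singleton, Prod.mk.injEq]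
    omega
  have hsmall_sum : ∑ x ∈ (range (m+1) ×ˢ range (n+1)).filter (fun x => ¬ 2 ≤ x.1 + x.2), g x
      = 1 + w*((m:ℂ)*s + (n:ℂ)*t) := by
    rw [hsmall]
    rw [Finset.sum_insert (by decide), Finset.sum_insert (by decide),
      Finset.sum_singleton]
    simp only [hg, Nat.choose_zero_right, Nat.choose_one_right, pow_zero, pow_one,
      Nat.cast_one]
    push_cast
    ring
  rw [hL, ← hsplit, hsmall_sum, hR]
  ring

/-- Key computation: for
`F(x,y) = (x + x^{M+1} y^N [a + A], y + x^M y^{N+1} [b + B])` with `aM + bN = -1`,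
`d = gcd(M,N)`, `m = M/d`, `n = N/d`, one has
`x₁^m y₁^n = x^m y^n - (1/d)(x^m y^n)^{d+1} + (x^m y^n)^{d+1} E(x,y)` with `E`
holomorphic near `0` and `E(0,0) = 0`. -/
theorem stmt_18 (M N : ℕ) (hM : 1 ≤ M) (hN : 1 ≤ N) (a b : ℂ)
    (hres : a * M + b * N = -1)
    (A B : ℂ × ℂ → ℂ) (hA : AnalyticAt ℂ A 0) (hB : AnalyticAt ℂ B 0)
    (hA0 : A 0 = 0) (hB0 : B 0 = 0)
    (d m n : ℕ) (hd : d = Nat.gcd M N) (hm : m = M / d) (hn : n = N / d) :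
    ∃ E : ℂ × ℂ → ℂ, AnalyticAt ℂ E 0 ∧ E 0 = 0 ∧
      ∀ᶠ p : ℂ × ℂ in nhds 0,
        (p.1 + p.1 ^ (M + 1) * p.2 ^ N * (a + A p)) ^ m *
          (p.2 + p.1 ^ M * p.2 ^ (N + 1) * (b + B p)) ^ n =
        p.1 ^ m * p.2 ^ n - (1 / (d : ℂ)) * (p.1 ^ m * p.2 ^ n) ^ (d + 1) +
          (p.1 ^ m * p.2 ^ n) ^ (d + 1) * E p := by
  have hd1 : 0 < d := by
    rw [hd]; exact Nat.gcd_pos_of_pos_left N hM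
  have hdM : m * d = M := by
    rw [hm, hd, Nat.div_mul_cancel (Nat.gcd_dvd_left M N)]
  have hdN : n * d = N := by
    rw [hn, hd, Nat.div_mul_cancel (Nat.gcd_dvd_right M N)]
  have hm1 : 1 ≤ m := by
    rcases Nat.eq_zero_or_pos m with h | h
    · exfalso; rw [h, zero_mul] at hdM; omega
    · exact h
  have hn1 : 1 ≤ n := by
    rcases Nat.eq_zero_or_pos n with h | h
    · exfalso; rw [h, zero_mul] at hdN; omega
    · exact h
  have hdC : (d : ℂ) ≠ 0 := Nat.cast_ne_zero.mpr (by omega)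
  have hmn : (m : ℂ) * a + (n : ℂ) * b = -(1 / d) := by
    have h1 : ((m : ℂ) * a + (n : ℂ) * b) * d = -1 := by
      have hMc : (M : ℂ) = (m : ℂ) * d := by rw [← hdM]; push_cast; ring
      have hNc : (N : ℂ) = (n : ℂ) * d := by rw [← hdN]; push_cast; ring
      rw [hMc, hNc] at hres
      linear_combination hres
    field_simp
    linear_combination h1
  refine ⟨fun p => (m : ℂ) * A p + (n : ℂ) * B p +
      (p.1 ^ m * p.2 ^ n) ^ d *
        Rf m n ((p.1 ^ m * p.2 ^ n) ^ d) (a + A p) (b + B p), ?_, ?_, ?_⟩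
  · apply AnalyticAt.add
    · exact (analyticAt_const.mul hA).add (analyticAt_const.mul hB)
    · exact AnalyticAt.mul (((analyticAt_fst.pow m).mul (analyticAt_snd.pow n)).pow d)
        (Rf_analytic (((analyticAt_fst.pow m).mul (analyticAt_snd.pow n)).pow d)
          (analyticAt_const.add hA) (analyticAt_const.add hB) m n)
  · have : (0 : ℂ × ℂ).1 = 0 := rfl
    simp [hA0, hB0, this, zero_pow (by omega : m ≠ 0), zero_pow (by omega : d ≠ 0)]
  · refine Filter.Eventually.of_forall fun p => ?_
    have e1 : p.1 + p.1 ^ (M + 1) * p.2 ^ N * (a + A p)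
        = p.1 * (1 + (p.1 ^ m * p.2 ^ n) ^ d * (a + A p)) := by
      rw [← hdM, ← hdN]; ring
    have e2 : p.2 + p.1 ^ M * p.2 ^ (N + 1) * (b + B p)
        = p.2 * (1 + (p.1 ^ m * p.2 ^ n) ^ d * (b + B p)) := by
      rw [← hdM, ← hdN]; ring
    have hk := key m n hm1 hn1 ((p.1 ^ m * p.2 ^ n) ^ d) (a + A p) (b + B p)
    have e3 : (p.1 * (1 + (p.1 ^ m * p.2 ^ n) ^ d * (a + A p))) ^ m *
          (p.2 * (1 + (p.1 ^ m * p.2 ^ n) ^ d * (b + B p))) ^ n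
        = p.1 ^ m * p.2 ^ n *
          ((1 + (p.1 ^ m * p.2 ^ n) ^ d * (a + A p)) ^ m *
           (1 + (p.1 ^ m * p.2 ^ n) ^ d * (b + B p)) ^ n) := by
      rw [mul_pow p.1 _ m, mul_pow p.2 _ n]; ring
    rw [e1, e2, e3, hk]
    beta_reduce
    linear_combination (p.1 ^ m * p.2 ^ n) ^ (d + 1) * hmn
end
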